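/- ROM-specific a posteriori error bound: under the hypotheses of the one-step bound and x̃^0 = x^0, for every k, ‖δx^k‖₂ ≤ Σ_{i=1}^{k} (Π_{j=i}^{k} γ_j) ‖e^i‖₂, where γ_j = 1/(1 − Δt_j ‖A‖₂) and e^i = Δt_i (A x̃^i + B f^i). -/

import Mathlib

open Matrix
set_option linter.unusedSectionVars false
noncomputable def vecNorm2 {ι : Type*} [Fintype ι] (v : ι → ℝ) : ℝ :=
  ‖(EuclideanSpace.equiv ι ℝ).symm v‖

noncomputable def opNorm2 {ι κ : Type*} [Fintype ι] [Fintype κ] [DecidableEq κ]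
    (A : Matrix ι κ ℝ) : ℝ :=
  ‖LinearMap.toContinuousLinearMap (Matrix.toEuclideanLin A)‖

variable {ι κ : Type*} [Fintype ι] [Fintype κ] [DecidableEq κ] [DecidableEq ι]

lemma vecNorm2_nonneg (v : ι → ℝ) : 0 ≤ vecNorm2 v := norm_nonneg _
lemma vecNorm2_add_le (u v : ι → ℝ) : vecNorm2 (u + v) ≤ vecNorm2 u + vecNorm2 v := by
  unfold vecNorm2; rw [map_add]; exact norm_add_le _ _
lemma vecNorm2_smul (a : ℝ) (v : ι → ℝ) : vecNorm2 (a • v) = |a| * vecNorm2 v := by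
  unfold vecNorm2; rw [_root_.map_smul, norm_smul, Real.norm_eq_abs]
lemma vecNorm2_zero : vecNorm2 (0 : ι → ℝ) = 0 := by
  unfold vecNorm2; rw [map_zero, norm_zero]
lemma vecNorm2_mulVec_le (M : Matrix ι κ ℝ) (v : κ → ℝ) :
    vecNorm2 (M *ᵥ v) ≤ opNorm2 M * vecNorm2 v := by
  unfold vecNorm2 opNorm2
  have : ((EuclideanSpace.equiv ι ℝ).symm (M *ᵥ v) : EuclideanSpace ℝ ι)
      = LinearMap.toContinuousLinearMap (Matrix.toEuclideanLin M)
        ((EuclideanSpace.equiv κ ℝ).symm v) := by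
    simp [Matrix.toEuclideanLin_apply_piLp_toLp]

  rw [this]
  exact (LinearMap.toContinuousLinearMap (Matrix.toEuclideanLin M)).le_opNorm _

lemma inner_eq_dot (u v : ι → ℝ) :
    (inner ℝ ((EuclideanSpace.equiv ι ℝ).symm u) ((EuclideanSpace.equiv ι ℝ).symm v) : ℝ)
      = u ⬝ᵥ v := by
  simp [PiLp.inner_apply, dotProduct, mul_comm]

lemma vecNorm2_sq (v : ι → ℝ) : vecNorm2 v * vecNorm2 v = v ⬝ᵥ v := by
  rw [← inner_eq_dot]
  exact (real_inner_self_eq_norm_mul_norm _).symm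

lemma dot_le_norms (u v : ι → ℝ) : u ⬝ᵥ v ≤ vecNorm2 u * vecNorm2 v := by
  rw [← inner_eq_dot]
  exact real_inner_le_norm _ _

lemma proj_contract {Ns ns : ℕ} (Φ : Matrix (Fin Ns) (Fin ns) ℝ) (hΦ : Φᵀ * Φ = 1)
    (P : Matrix (Fin Ns) (Fin Ns) ℝ) (hP : P = Φ * Φᵀ) (v : Fin Ns → ℝ) :
    vecNorm2 (v - P *ᵥ v) ≤ vecNorm2 v := by
  have hPP : P * P = P := by
    rw [hP, Matrix.mul_assoc, ← Matrix.mul_assoc Φᵀ, hΦ, Matrix.one_mul]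
  have hPT : Pᵀ = P := by rw [hP, Matrix.transpose_mul, Matrix.transpose_transpose]
  set w := v - P *ᵥ v with hw
  have hPw : P *ᵥ w = 0 := by
    rw [hw, Matrix.mulVec_sub, Matrix.mulVec_mulVec, hPP, sub_self]
  have hdot : w ⬝ᵥ (P *ᵥ v) = 0 := by
    rw [Matrix.dotProduct_mulVec, ← Matrix.mulVec_transpose, hPT, hPw,
      zero_dotProduct]
  have key : vecNorm2 w * vecNorm2 w ≤ vecNorm2 w * vecNorm2 v := by
    rw [vecNorm2_sq]
    calc w ⬝ᵥ w = w ⬝ᵥ v := by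
          rw [show (w ⬝ᵥ w) = w ⬝ᵥ (v - P *ᵥ v) from rfl, dotProduct_sub,
            hdot, sub_zero]
      _ ≤ vecNorm2 w * vecNorm2 v := dot_le_norms _ _
  have h0 := vecNorm2_nonneg w
  have h1 := vecNorm2_nonneg v
  nlinarith

/-- ROM-specific a posteriori error bound for the spatial ROM. -/
theorem rom_specific_error_bound {Ns Ni Nt ns : ℕ}
    (A : Matrix (Fin Ns) (Fin Ns) ℝ) (B : Matrix (Fin Ns) (Fin Ni) ℝ)
    (Δt : ℕ → ℝ) (f : ℕ → Fin Ni → ℝ)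
    (Φ : Matrix (Fin Ns) (Fin ns) ℝ) (hΦ : Φᵀ * Φ = 1)
    (P : Matrix (Fin Ns) (Fin Ns) ℝ) (hP : P = Φ * Φᵀ)
    (x xt : ℕ → Fin Ns → ℝ)
    (hΔt : ∀ k, 1 ≤ k → k ≤ Nt → 0 < Δt k)
    (hfom : ∀ k, 1 ≤ k → k ≤ Nt →
      (1 - Δt k • A) *ᵥ x k = x (k - 1) + Δt k • (B *ᵥ f k))
    (hrom : ∀ k, 1 ≤ k → k ≤ Nt →
      xt k - xt (k - 1) = Δt k • (P *ᵥ (A *ᵥ xt k)) + Δt k • (P *ᵥ (B *ᵥ f k)))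
    (hsmall : ∀ k, 1 ≤ k → k ≤ Nt → Δt k * opNorm2 A < 1)
    (h0 : xt 0 = x 0)
    (γ : ℕ → ℝ) (hγ : ∀ k, γ k = (1 - Δt k * opNorm2 A)⁻¹)
    (e : ℕ → Fin Ns → ℝ)
    (he : ∀ k, e k = Δt k • (A *ᵥ xt k + B *ᵥ f k)) :
    ∀ k, 1 ≤ k → k ≤ Nt →
      vecNorm2 (x k - xt k) ≤
        ∑ i ∈ Finset.Icc 1 k, (∏ j ∈ Finset.Icc i k, γ j) * vecNorm2 (e i) := by
  have step : ∀ k, 1 ≤ k → k ≤ Nt →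
      vecNorm2 (x k - xt k) ≤
        γ k * (vecNorm2 (x (k-1) - xt (k-1)) + vecNorm2 (e k)) := by
    intro k hk1 hk2
    have hPe : P *ᵥ e k = xt k - xt (k - 1) := by
      rw [he, Matrix.mulVec_smul, Matrix.mulVec_add, hrom k hk1 hk2, smul_add]
    have h1 := hfom k hk1 hk2
    rw [Matrix.sub_mulVec, Matrix.one_mulVec, Matrix.smul_mulVec] at h1
    have key : (x k - xt k) - Δt k • (A *ᵥ (x k - xt k)) =
        (x (k-1) - xt (k-1)) + (e k - P *ᵥ e k) := by
      rw [Matrix.mulVec_sub, hPe, he, smul_sub, smul_add]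
      linear_combination (norm := module) h1
    have hδ : x k - xt k = ((x (k-1) - xt (k-1)) + (e k - P *ᵥ e k))
        + Δt k • (A *ᵥ (x k - xt k)) := sub_eq_iff_eq_add.mp key
    have hb1 : vecNorm2 (x k - xt k) ≤
        vecNorm2 ((x (k-1) - xt (k-1)) + (e k - P *ᵥ e k))
          + vecNorm2 (Δt k • (A *ᵥ (x k - xt k))) := by
      nth_rewrite 1 [hδ]; exact vecNorm2_add_le _ _
    have hb2 : vecNorm2 ((x (k-1) - xt (k-1)) + (e k - P *ᵥ e k)) ≤
        vecNorm2 (x (k-1) - xt (k-1)) + vecNorm2 (e k) :=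
      le_trans (vecNorm2_add_le _ _)
        (by
          have := proj_contract Φ hΦ P hP (e k)
          linarith)
    have hb3 : vecNorm2 (Δt k • (A *ᵥ (x k - xt k))) ≤
        Δt k * opNorm2 A * vecNorm2 (x k - xt k) := by
      rw [vecNorm2_smul, abs_of_pos (hΔt k hk1 hk2), mul_assoc]
      exact mul_le_mul_of_nonneg_left (vecNorm2_mulVec_le A _) (hΔt k hk1 hk2).le
    have hc : 0 < 1 - Δt k * opNorm2 A := by linarith [hsmall k hk1 hk2]
    rw [hγ, le_inv_mul_iff₀ hc]
    linarith
  intro k hk1 hk2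
  clear hk1
  induction k with
  | zero =>
    simp [h0, vecNorm2_zero]
  | succ k ih =>
    have hk : k ≤ Nt := Nat.le_of_succ_le hk2
    have hs := step (k+1) (Nat.succ_le_succ (Nat.zero_le k)) hk2
    simp only [Nat.add_sub_cancel] at hs
    have hγpos : 0 ≤ γ (k+1) := by
      rw [hγ]
      exact inv_nonneg.mpr (by linarith [hsmall (k+1) (Nat.succ_le_succ (Nat.zero_le k)) hk2])
    have hsum : ∑ i ∈ Finset.Icc 1 (k+1), (∏ j ∈ Finset.Icc i (k+1), γ j) * vecNorm2 (e i)
        = γ (k+1) * ((∑ i ∈ Finset.Icc 1 k, (∏ j ∈ Finset.Icc i k, γ j) * vecNorm2 (e i))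
            + vecNorm2 (e (k+1))) := by
      rw [← Finset.insert_Icc_right_eq_Icc_add_one (by omega : 1 ≤ k + 1), Finset.sum_insert (by simp)]
      rw [Finset.Icc_self, Finset.prod_singleton]
      rw [mul_add, Finset.mul_sum]
      rw [add_comm (γ (k+1) * _)]
      congr 1
      · apply Finset.sum_congr rfl
        intro i hi
        simp only [Finset.mem_Icc] at hi
        rw [← Finset.insert_Icc_right_eq_Icc_add_one (by omega : i ≤ k + 1), Finset.prod_insert (by simp)]
        ring
    rw [hsum]
    calc vecNorm2 (x (k+1) - xt (k+1))
        ≤ γ (k+1) * (vecNorm2 (x k - xt k) + vecNorm2 (e (k+1))) := hs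
      _ ≤ γ (k+1) * ((∑ i ∈ Finset.Icc 1 k, (∏ j ∈ Finset.Icc i k, γ j) * vecNorm2 (e i))
            + vecNorm2 (e (k+1))) := by
          apply mul_le_mul_of_nonneg_left _ hγpos
          linarith [ih hk]
      _ = _ := rfl
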